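/- The set of 3×3 unistochastic matrices is closed under multiplication by factorisable matrices (if A is a 3×3 factorisable bistochastic matrix and B is a 3×3 unistochastic matrix, then AB and BA are unistochastic) and is star-shaped with respect to the flat matrix W₃ (if B is unistochastic then (1−λ)B + λW₃ is unistochastic for all λ ∈ [0,1]). -/

import Mathlib

/-- A `d × d` real matrix is bistochastic (doubly stochastic) if all its entries are
non-negative and each row and each column sums to `1`. -/
def Bistochastic {d : ℕ} (B : Matrix (Fin d) (Fin d) ℝ) : Prop :=
  (∀ j k, 0 ≤ B j k) ∧ (∀ j, ∑ k, B j k = 1) ∧ (∀ k, ∑ j, B j k = 1)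

/-- A bistochastic matrix is bracelet if for every pair of columns `k, l` and every `j₀`,
`2 √(B j₀ k * B j₀ l) ≤ ∑ j, √(B j k * B j l)` (equivalently, twice the maximum is at most
the sum), and the analogous condition holds for every pair of rows. -/
def Bracelet {d : ℕ} (B : Matrix (Fin d) (Fin d) ℝ) : Prop :=
  Bistochastic B ∧
  (∀ k l j₀ : Fin d, 2 * Real.sqrt (B j₀ k * B j₀ l) ≤ ∑ j, Real.sqrt (B j k * B j l)) ∧
  (∀ j k l₀ : Fin d, 2 * Real.sqrt (B j l₀ * B k l₀) ≤ ∑ l, Real.sqrt (B j l * B k l))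

/-- A `d × d` bistochastic matrix `E` is elementary if `E k k = 1` for at least `d - 2`
indices `k`. -/
def Elementary {d : ℕ} (E : Matrix (Fin d) (Fin d) ℝ) : Prop :=
  Bistochastic E ∧ ∃ S : Finset (Fin d), d - 2 ≤ S.card ∧ ∀ k ∈ S, E k k = 1

/-- The set `F_d` of factorisable bistochastic matrices: the topological closure of the set
of finite products of elementary bistochastic matrices (the identity being the empty
product). -/
def Factorisable {d : ℕ} (B : Matrix (Fin d) (Fin d) ℝ) : Prop :=
  B ∈ closure { M : Matrix (Fin d) (Fin d) ℝ |
    ∃ L : List (Matrix (Fin d) (Fin d) ℝ), (∀ E ∈ L, Elementary E) ∧ M = L.prod }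

/-- A `d × d` bistochastic matrix `B` is unistochastic if there is a unitary matrix `U`
with `B j k = |U j k|²` for all `j, k`. -/
def Unistochastic {d : ℕ} (B : Matrix (Fin d) (Fin d) ℝ) : Prop :=
  Bistochastic B ∧ ∃ U ∈ Matrix.unitaryGroup (Fin d) ℂ,
    ∀ j k, B j k = ‖U j k‖ ^ 2

/-- The flat (van der Waerden) matrix `W_d` with all entries equal to `1/d`. -/
noncomputable def flatMatrix (d : ℕ) : Matrix (Fin d) (Fin d) ℝ := Matrix.of fun _ _ => (1 : ℝ) / d

/-!
For a `3 × 3` bistochastic matrix `B` and any two columns `k ≠ l`, unistochasticity is equivalent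
to the numbers `√(B j k * B j l)` being the side lengths of a triangle. Orthogonality of two
columns of a unitary matrix forces the triangle; conversely, a closed triangle provides phases
that make two columns with the prescribed moduli orthogonal, and the conjugated cross product
completes them to a unitary matrix.

If `E c c = 1`, then column `c` of `B * E` is column `c` of `B`, and the side lengths of `B * E`
for the columns `c, a` are Euclidean norms of vectors whose components are scaled side lengths of
`B`; Minkowski's inequality keeps the triangle. Left factors are handled by transposition. The
criterion shows that the unistochastic matrices form a closed set, so stability under elementary
factors passes to the closure of their products.

For `(1 - t) • B + t • W₃` the triangle inequality is checked after squaring, with the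
Cauchy–Schwarz bound `a √(x y) + b ≤ √((a x + b) (a y + b))` controlling the cross term.
-/

open Complex Matrix Finset

def PolygonInequality {ι : Type*} [Fintype ι] (r : ι → ℝ) : Prop :=
  ∀ i, 2 * r i ≤ ∑ j, r j

section Polygon

variable {ι : Type*} [Fintype ι]

theorem polygonInequality_norm_of_sum_eq_zero {E : Type*} [SeminormedAddCommGroup E]
    {z : ι → E} (hz : ∑ i, z i = 0) : PolygonInequality fun i => ‖z i‖ := by
  classical
  intro i
  have hi := Finset.add_sum_erase univ z (mem_univ i)
  have : ‖z i‖ ≤ ∑ j ∈ univ.erase i, ‖z j‖ := by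
    rw [← norm_neg, neg_eq_of_add_eq_zero_right (hi.trans hz)]
    exact norm_sum_le _ _
  linarith [Finset.add_sum_erase univ (fun j => ‖z j‖) (mem_univ i)]

theorem PolygonInequality.const_mul {r : ι → ℝ} (h : PolygonInequality r) {c : ℝ} (hc : 0 ≤ c) :
    PolygonInequality fun i => c * r i := by
  intro i
  rw [← mul_sum, mul_left_comm]
  exact mul_le_mul_of_nonneg_left (h i) hc

theorem PolygonInequality.sqrt_sum_sq {κ : Type*} [Fintype κ] {p : κ → ι → ℝ}
    (h : ∀ m, PolygonInequality (p m)) (hp : ∀ m i, 0 ≤ p m i) :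
    PolygonInequality fun i => √(∑ m, p m i ^ 2) := by
  let v : ι → EuclideanSpace ℝ κ := fun i => WithLp.toLp 2 fun m => p m i
  have hv : ∀ i, ‖v i‖ = √(∑ m, p m i ^ 2) := fun i => by simp [v, EuclideanSpace.norm_eq]
  intro i
  simp only [← hv]
  calc 2 * ‖v i‖ = ‖(2 : ℝ) • v i‖ := by rw [norm_smul, Real.norm_two]
    _ ≤ ‖∑ j, v j‖ := by
      simp only [EuclideanSpace.norm_eq]
      gcongr with m
      simpa [v, abs_of_nonneg (hp m i), abs_of_nonneg (sum_nonneg fun j _ => hp m j)]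
        using h m i
    _ ≤ ∑ j, ‖v j‖ := norm_sum_le _ _

theorem polygonInequality_fin_three_iff {r : Fin 3 → ℝ} :
    PolygonInequality r ↔ r 0 ≤ r 1 + r 2 ∧ r 1 ≤ r 0 + r 2 ∧ r 2 ≤ r 0 + r 1 := by
  refine ⟨fun h => ?_, fun ⟨h0, h1, h2⟩ i => ?_⟩
  · have h0 := h 0; have h1 := h 1; have h2 := h 2
    simp only [Fin.sum_univ_three] at h0 h1 h2
    exact ⟨by linarith, by linarith, by linarith⟩
  · fin_cases i <;> simp [Fin.sum_univ_three] <;> linarith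

end Polygon

theorem sqrt_mul_add_sqrt_mul_le {x₁ y₁ x₂ y₂ : ℝ} (hx₁ : 0 ≤ x₁) (hy₁ : 0 ≤ y₁) (hx₂ : 0 ≤ x₂)
    (hy₂ : 0 ≤ y₂) : √(x₁ * y₁) + √(x₂ * y₂) ≤ √((x₁ + x₂) * (y₁ + y₂)) := by
  simpa [Fin.sum_univ_two, Real.sqrt_mul, hx₁, hx₂, add_nonneg]
    using Real.sum_sqrt_mul_sqrt_le univ (f := ![x₁, x₂]) (g := ![y₁, y₂])
      (by simp [Fin.forall_fin_two, hx₁, hx₂]) (by simp [Fin.forall_fin_two, hy₁, hy₂])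

theorem mul_sqrt_mul_add_le_sqrt_mul {a b x y : ℝ} (ha : 0 ≤ a) (hb : 0 ≤ b) (hx : 0 ≤ x)
    (hy : 0 ≤ y) : a * √(x * y) + b ≤ √((a * x + b) * (a * y + b)) := by
  have := sqrt_mul_add_sqrt_mul_le (mul_nonneg ha hx) (mul_nonneg ha hy) hb hb
  rwa [Real.sqrt_mul_self hb, mul_mul_mul_comm, Real.sqrt_mul (mul_self_nonneg a),
    Real.sqrt_mul_self ha] at this

theorem sqrt_mul_affine_le_add {a b x₀ x₁ x₂ y₀ y₁ y₂ : ℝ} (ha : 0 ≤ a) (hb : 0 ≤ b)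
    (hx₀ : 0 ≤ x₀) (hx₁ : 0 ≤ x₁) (hx₂ : 0 ≤ x₂) (hy₀ : 0 ≤ y₀) (hy₁ : 0 ≤ y₁) (hy₂ : 0 ≤ y₂)
    (hx : x₀ + x₁ + x₂ = 1) (hy : y₀ + y₁ + y₂ = 1)
    (h : √(x₀ * y₀) ≤ √(x₁ * y₁) + √(x₂ * y₂)) :
    √((a * x₀ + b) * (a * y₀ + b)) ≤
      √((a * x₁ + b) * (a * y₁ + b)) + √((a * x₂ + b) * (a * y₂ + b)) := by
  -- the triangle and Cauchy–Schwarz give `x₀ y₀ ≤ (1 - x₀) (1 - y₀)`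
  have hsum : x₀ + y₀ ≤ 1 := by
    have h' := h.trans (sqrt_mul_add_sqrt_mul_le hx₁ hy₁ hx₂ hy₂)
    rw [Real.sqrt_le_sqrt_iff (by positivity)] at h'
    nlinarith
  set r₀ := √(x₀ * y₀)
  set r₁ := √(x₁ * y₁)
  set r₂ := √(x₂ * y₂)
  set f₁ := √((a * x₁ + b) * (a * y₁ + b))
  set f₂ := √((a * x₂ + b) * (a * y₂ + b))
  have hr₀ : r₀ ^ 2 = x₀ * y₀ := Real.sq_sqrt (by positivity)
  have hr₁ : r₁ ^ 2 = x₁ * y₁ := Real.sq_sqrt (by positivity)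
  have hr₂ : r₂ ^ 2 = x₂ * y₂ := Real.sq_sqrt (by positivity)
  have hf₁ : f₁ ^ 2 = (a * x₁ + b) * (a * y₁ + b) := Real.sq_sqrt (by positivity)
  have hf₂ : f₂ ^ 2 = (a * x₂ + b) * (a * y₂ + b) := Real.sq_sqrt (by positivity)
  have hprod : (a * r₁ + b) * (a * r₂ + b) ≤ f₁ * f₂ :=
    mul_le_mul (mul_sqrt_mul_add_le_sqrt_mul ha hb hx₁ hy₁)
      (mul_sqrt_mul_add_le_sqrt_mul ha hb hx₂ hy₂) (by positivity) (Real.sqrt_nonneg _)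
  have htri : r₀ ^ 2 ≤ (r₁ + r₂) ^ 2 := pow_le_pow_left₀ (Real.sqrt_nonneg _) h 2
  rw [Real.sqrt_le_left (by positivity)]
  have hab : 0 ≤ a * b := mul_nonneg ha hb
  linarith [mul_le_mul_of_nonneg_left htri (sq_nonneg a), mul_le_mul_of_nonneg_left hsum hab,
    mul_nonneg hab (add_nonneg (Real.sqrt_nonneg (x₁ * y₁)) (Real.sqrt_nonneg (x₂ * y₂))),
    congrArg (a * b * ·) hx, congrArg (a * b * ·) hy, congrArg (a ^ 2 * ·) hr₀,
    congrArg (a ^ 2 * ·) hr₁, congrArg (a ^ 2 * ·) hr₂, sq_nonneg b]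

theorem PolygonInequality.sqrt_mul_affine {x y : Fin 3 → ℝ} (hx : ∀ j, 0 ≤ x j)
    (hy : ∀ j, 0 ≤ y j) (hxs : ∑ j, x j = 1) (hys : ∑ j, y j = 1)
    (h : PolygonInequality fun j => √(x j * y j)) {a b : ℝ} (ha : 0 ≤ a) (hb : 0 ≤ b) :
    PolygonInequality fun j => √((a * x j + b) * (a * y j + b)) := by
  rw [Fin.sum_univ_three] at hxs hys
  obtain ⟨h₀, h₁, h₂⟩ := polygonInequality_fin_three_iff.mp h
  refine polygonInequality_fin_three_iff.mpr ⟨?_, ?_, ?_⟩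
  · exact sqrt_mul_affine_le_add ha hb (hx 0) (hx 1) (hx 2) (hy 0) (hy 1) (hy 2) hxs hys h₀
  · exact sqrt_mul_affine_le_add ha hb (hx 1) (hx 0) (hx 2) (hy 1) (hy 0) (hy 2)
      (by linarith) (by linarith) h₁
  · exact sqrt_mul_affine_le_add ha hb (hx 2) (hx 0) (hx 1) (hy 2) (hy 0) (hy 1)
      (by linarith) (by linarith) h₂

theorem exists_sum_mul_exp_eq_zero {r : Fin 3 → ℝ} (hr : ∀ j, 0 ≤ r j)
    (h : PolygonInequality r) : ∃ θ : Fin 3 → ℝ, ∑ j, (r j : ℂ) * exp (θ j * I) = 0 := by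
  obtain ⟨h₀, h₁, h₂⟩ := polygonInequality_fin_three_iff.mp h
  let f : ℝ → ℝ := fun t => ‖(r 0 : ℂ) + r 1 * exp (t * I)‖
  have hf0 : f 0 = r 0 + r 1 := by
    simp only [f, ofReal_zero, zero_mul, Complex.exp_zero, mul_one]
    exact_mod_cast (Complex.norm_real _).trans (abs_of_nonneg (add_nonneg (hr 0) (hr 1)))
  have hfπ : f Real.pi = |r 0 - r 1| := by
    simp only [f, Complex.exp_pi_mul_I, mul_neg_one, ← sub_eq_add_neg]
    exact_mod_cast Complex.norm_real _
  obtain ⟨t, -, ht⟩ : r 2 ∈ f '' Set.Icc 0 Real.pi :=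
    intermediate_value_Icc' Real.pi_pos.le (by fun_prop)
      ⟨by rw [hfπ]; exact abs_sub_le_iff.mpr ⟨by linarith, by linarith⟩, by rw [hf0]; exact h₂⟩
  set w := -((r 0 : ℂ) + r 1 * exp (t * I))
  refine ⟨![0, t, arg w], ?_⟩
  have hw : (r 2 : ℂ) * exp (arg w * I) = w := by
    rw [← ht, show f t = ‖w‖ from (norm_neg _).symm, norm_mul_exp_arg_mul_I]
  simp only [Fin.sum_univ_three, Matrix.cons_val_zero, Matrix.cons_val_one, Matrix.cons_val_two,
    Matrix.head_cons, Matrix.tail_cons, ofReal_zero, zero_mul, Complex.exp_zero, mul_one, hw, w]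
  ring

section Bistochastic

variable {d : ℕ} {B E : Matrix (Fin d) (Fin d) ℝ}

theorem bistochastic_iff_mem_doublyStochastic :
    Bistochastic B ↔ B ∈ doublyStochastic ℝ (Fin d) :=
  mem_doublyStochastic_iff_sum.symm

theorem Bistochastic.mul (hB : Bistochastic B) (hE : Bistochastic E) : Bistochastic (B * E) :=
  bistochastic_iff_mem_doublyStochastic.mpr <| Submonoid.mul_mem _
    (bistochastic_iff_mem_doublyStochastic.mp hB) (bistochastic_iff_mem_doublyStochastic.mp hE)

theorem Bistochastic.transpose (hB : Bistochastic B) : Bistochastic Bᵀ :=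
  ⟨fun j k => hB.1 k j, hB.2.2, hB.2.1⟩

theorem Bistochastic.submatrix_id (hB : Bistochastic B) (σ : Equiv.Perm (Fin d)) :
    Bistochastic (B.submatrix id σ) :=
  ⟨fun j k => hB.1 j (σ k), fun j => (Equiv.sum_comp σ (B j)).trans (hB.2.1 j),
    fun k => hB.2.2 (σ k)⟩

theorem Bistochastic.apply_eq_zero_of_apply_self_eq_one (hE : Bistochastic E) {c : Fin d}
    (hc : E c c = 1) {a : Fin d} (ha : a ≠ c) : E c a = 0 ∧ E a c = 0 := by
  have hrow := Finset.add_sum_erase univ (E c) (mem_univ c)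
  have hcol := Finset.add_sum_erase univ (fun j => E j c) (mem_univ c)
  rw [hE.2.1, hc, add_eq_left, Finset.sum_eq_zero_iff_of_nonneg fun k _ => hE.1 c k] at hrow
  rw [hE.2.2, hc, add_eq_left, Finset.sum_eq_zero_iff_of_nonneg fun j _ => hE.1 j c] at hcol
  exact ⟨hrow a (mem_erase.mpr ⟨ha, mem_univ a⟩), hcol a (mem_erase.mpr ⟨ha, mem_univ a⟩)⟩

theorem isClosed_setOf_bistochastic :
    IsClosed {B : Matrix (Fin d) (Fin d) ℝ | Bistochastic B} := by
  simp only [Bistochastic, Set.ofPred_and, Set.ofPred_forall]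
  refine .inter (isClosed_iInter fun j => isClosed_iInter fun k =>
    isClosed_le continuous_const (by fun_prop)) (.inter ?_ ?_) <;>
  exact isClosed_iInter fun j => isClosed_eq (by fun_prop) continuous_const

end Bistochastic

theorem sum_norm_sq_apply_of_mem_unitaryGroup {n : Type*} [Fintype n] [DecidableEq n]
    {U : Matrix n n ℂ} (hU : U ∈ unitaryGroup n ℂ) (j : n) : ∑ k, ‖U j k‖ ^ 2 = 1 := by
  have h := congrFun (congrFun (mem_unitaryGroup_iff.mp hU) j) j
  simp only [mul_apply, star_apply, one_apply_eq, RCLike.star_def, mul_conj'] at h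
  exact_mod_cast h

theorem exists_mem_unitaryGroup_of_orthonormal {u v : Fin 3 → ℂ} (hu : star u ⬝ᵥ u = 1)
    (hv : star v ⬝ᵥ v = 1) (huv : star u ⬝ᵥ v = 0) :
    ∃ U ∈ unitaryGroup (Fin 3) ℂ, ∀ j, U j 0 = u j ∧ U j 1 = v j := by
  have hvu : star v ⬝ᵥ u = 0 := by rw [← star_star u, star_dotProduct_star, huv, star_zero]
  have hwu : u ⨯₃ v ⬝ᵥ u = 0 := by rw [dotProduct_comm, dot_self_cross]
  have hwv : u ⨯₃ v ⬝ᵥ v = 0 := by rw [dotProduct_comm, dot_cross_self]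
  have hww : u ⨯₃ v ⬝ᵥ star (u ⨯₃ v) = 1 := by
    have hstar : star (u ⨯₃ v) = star u ⨯₃ star v := by
      ext i; fin_cases i <;> simp [cross_apply]
    rw [hstar, cross_dot_cross, dotProduct_comm u, dotProduct_comm v, dotProduct_comm u, hu, hv,
      hvu]
    ring
  refine ⟨(Matrix.of ![u, v, star (u ⨯₃ v)])ᵀ, ?_, fun j => ⟨rfl, rfl⟩⟩
  rw [mem_unitaryGroup_iff']
  ext a b
  change star (![u, v, star (u ⨯₃ v)] a) ⬝ᵥ ![u, v, star (u ⨯₃ v)] b =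
    (1 : Matrix (Fin 3) (Fin 3) ℂ) a b
  fin_cases a <;> fin_cases b <;> simp [star_dotProduct_star, hu, hv, huv, hvu, hwu, hwv, hww]

namespace Unistochastic

variable {d : ℕ} {B : Matrix (Fin d) (Fin d) ℝ}

theorem transpose (hB : Unistochastic B) : Unistochastic Bᵀ := by
  obtain ⟨hB, U, hU, hBU⟩ := hB
  exact ⟨hB.transpose, Uᵀ, transpose_mem_unitaryGroup_iff.mpr hU, fun j k => hBU k j⟩

theorem submatrix_id (hB : Unistochastic B) (σ : Equiv.Perm (Fin d)) :
    Unistochastic (B.submatrix id σ) := by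
  obtain ⟨hB, U, hU, hBU⟩ := hB
  refine ⟨hB.submatrix_id σ, U.submatrix id σ, ?_, fun j k => hBU j (σ k)⟩
  rw [mem_unitaryGroup_iff', star_eq_conjTranspose, conjTranspose_submatrix]
  change Uᴴ.submatrix σ (Equiv.refl _) * U.submatrix (Equiv.refl _) σ = 1
  rw [submatrix_mul_equiv, ← star_eq_conjTranspose, mem_unitaryGroup_iff'.mp hU,
    submatrix_one_equiv]

theorem polygonInequality (hB : Unistochastic B) {k l : Fin d} (hkl : k ≠ l) :
    PolygonInequality fun j => √(B j k * B j l) := by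
  obtain ⟨-, U, hU, hBU⟩ := hB
  have horth : ∑ j, star (U j k) * U j l = 0 := by
    simpa [mul_apply, hkl] using congrFun (congrFun (mem_unitaryGroup_iff'.mp hU) k) l
  convert polygonInequality_norm_of_sum_eq_zero horth using 2 with j
  rw [hBU, hBU, ← mul_pow, Real.sqrt_sq (by positivity), norm_mul, norm_star]

end Unistochastic

theorem unistochastic_of_polygonInequality_zero_one {B : Matrix (Fin 3) (Fin 3) ℝ}
    (hB : Bistochastic B) (h : PolygonInequality fun j => √(B j 0 * B j 1)) : Unistochastic B := by
  obtain ⟨θ, hθ⟩ := exists_sum_mul_exp_eq_zero (fun j => Real.sqrt_nonneg _) h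
  let u : Fin 3 → ℂ := fun j => √(B j 0)
  let v : Fin 3 → ℂ := fun j => √(B j 1) * exp (θ j * I)
  have hu : ∀ j, ‖u j‖ ^ 2 = B j 0 := fun j => by simp [u, Real.sq_sqrt (hB.1 j 0)]
  have hv : ∀ j, ‖v j‖ ^ 2 = B j 1 := fun j => by simp [v, Real.sq_sqrt (hB.1 j 1)]
  have hnorm : ∀ (w : Fin 3 → ℂ) (k : Fin 3), (∀ j, ‖w j‖ ^ 2 = B j k) → star w ⬝ᵥ w = 1 := by
    intro w k hw
    have hsum : ∑ j, ‖w j‖ ^ 2 = 1 := by simpa only [hw] using hB.2.2 k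
    simp only [dotProduct, Pi.star_apply, RCLike.star_def, conj_mul']
    exact_mod_cast hsum
  have huv : star u ⬝ᵥ v = 0 := by
    rw [← hθ]
    refine Finset.sum_congr rfl fun j _ => ?_
    simp only [u, v, Pi.star_apply, RCLike.star_def, conj_ofReal, ← mul_assoc, ← ofReal_mul,
      ← Real.sqrt_mul (hB.1 j 0)]
  obtain ⟨U, hU, hUu⟩ := exists_mem_unitaryGroup_of_orthonormal (hnorm u 0 hu) (hnorm v 1 hv) huv
  refine ⟨hB, U, hU, fun j k => ?_⟩
  have hrow := sum_norm_sq_apply_of_mem_unitaryGroup hU j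
  have hBrow := hB.2.1 j
  rw [Fin.sum_univ_three, (hUu j).1, (hUu j).2, hu, hv] at hrow
  rw [Fin.sum_univ_three] at hBrow
  fin_cases k
  · exact ((hUu j).1 ▸ hu j).symm
  · exact ((hUu j).2 ▸ hv j).symm
  · simp only [Fin.reduceFinMk]
    linarith

theorem unistochastic_iff_polygonInequality {B : Matrix (Fin 3) (Fin 3) ℝ} {k l : Fin 3}
    (hkl : k ≠ l) :
    Unistochastic B ↔ Bistochastic B ∧ PolygonInequality fun j => √(B j k * B j l) := by
  refine ⟨fun hB => ⟨hB.1, hB.polygonInequality hkl⟩, fun ⟨hB, h⟩ => ?_⟩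
  have hperm : ∀ k l : Fin 3, k ≠ l → ∃ σ : Equiv.Perm (Fin 3), σ 0 = k ∧ σ 1 = l := by decide
  obtain ⟨σ, rfl, rfl⟩ := hperm k l hkl
  have hσ := unistochastic_of_polygonInequality_zero_one (hB.submatrix_id σ) h
  simpa using hσ.submatrix_id σ⁻¹

theorem isClosed_setOf_unistochastic :
    IsClosed {B : Matrix (Fin 3) (Fin 3) ℝ | Unistochastic B} := by
  simp only [unistochastic_iff_polygonInequality (zero_ne_one' (Fin 3)), Set.ofPred_and]
  refine isClosed_setOf_bistochastic.inter ?_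
  simp only [PolygonInequality, Set.ofPred_forall]
  exact isClosed_iInter fun i => isClosed_le (by fun_prop) (by fun_prop)

theorem Unistochastic.polygonInequality_mul {d : ℕ} {B E : Matrix (Fin d) (Fin d) ℝ}
    (hB : Unistochastic B) (hE : Bistochastic E) {c a : Fin d} (hc : E c c = 1) (hac : a ≠ c) :
    PolygonInequality fun j => √((B * E) j c * (B * E) j a) := by
  have hBE : ∀ j, (B * E) j c * (B * E) j a = ∑ m, (√(E m a) * √(B j c * B j m)) ^ 2 := by
    intro j
    have hcol : (B * E) j c = B j c := by
      rw [mul_apply, Finset.sum_eq_single c (fun m _ hm => ?_) (by simp), hc, mul_one]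
      rw [(hE.apply_eq_zero_of_apply_self_eq_one hc hm).2, mul_zero]
    rw [hcol, mul_apply, Finset.mul_sum]
    refine Finset.sum_congr rfl fun m _ => ?_
    rw [mul_pow, Real.sq_sqrt (hE.1 m a), Real.sq_sqrt (mul_nonneg (hB.1.1 j c) (hB.1.1 j m))]
    ring
  simp only [hBE]
  refine PolygonInequality.sqrt_sum_sq (fun m => ?_) fun m j => by positivity
  by_cases hm : m = c
  · subst hm
    simp [(hE.apply_eq_zero_of_apply_self_eq_one hc hac).1, PolygonInequality]
  · exact (hB.polygonInequality (Ne.symm hm)).const_mul (Real.sqrt_nonneg _)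

theorem Unistochastic.mul_of_apply_self_eq_one {B E : Matrix (Fin 3) (Fin 3) ℝ}
    (hB : Unistochastic B) (hE : Bistochastic E) {c : Fin 3} (hc : E c c = 1) :
    Unistochastic (B * E) := by
  obtain ⟨a, hac⟩ := exists_ne c
  exact (unistochastic_iff_polygonInequality hac.symm).mpr
    ⟨hB.1.mul hE, hB.polygonInequality_mul hE hc hac⟩

theorem Elementary.exists_apply_self_eq_one {d : ℕ} (hd : 3 ≤ d)
    {E : Matrix (Fin d) (Fin d) ℝ} (hE : Elementary E) : ∃ c, E c c = 1 := by
  obtain ⟨-, S, hS, hSE⟩ := hE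
  obtain ⟨c, hc⟩ := Finset.card_pos.mp (by omega : 0 < S.card)
  exact ⟨c, hSE c hc⟩

theorem Unistochastic.mul_elementary {B E : Matrix (Fin 3) (Fin 3) ℝ} (hB : Unistochastic B)
    (hE : Elementary E) : Unistochastic (B * E) :=
  have ⟨_, hc⟩ := hE.exists_apply_self_eq_one le_rfl
  hB.mul_of_apply_self_eq_one hE.1 hc

theorem Unistochastic.elementary_mul {B E : Matrix (Fin 3) (Fin 3) ℝ} (hB : Unistochastic B)
    (hE : Elementary E) : Unistochastic (E * B) := by
  have ⟨_, hc⟩ := hE.exists_apply_self_eq_one le_rfl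
  simpa using (hB.transpose.mul_of_apply_self_eq_one hE.1.transpose hc).transpose

theorem Factorisable.mem_of_isClosed {d : ℕ} {S : Submonoid (Matrix (Fin d) (Fin d) ℝ)}
    (hS : IsClosed (S : Set (Matrix (Fin d) (Fin d) ℝ))) (hES : ∀ E, Elementary E → E ∈ S)
    {A : Matrix (Fin d) (Fin d) ℝ} (hA : Factorisable A) : A ∈ S :=
  closure_minimal (by rintro _ ⟨L, hL, rfl⟩; exact S.list_prod_mem fun E hE => hES E (hL E hE))
    hS hA

def unistochasticStabilizer (d : ℕ) : Submonoid (Matrix (Fin d) (Fin d) ℝ) where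
  carrier := {M | ∀ B, Unistochastic B → Unistochastic (B * M) ∧ Unistochastic (M * B)}
  mul_mem' {M N} hM hN B hB :=
    ⟨mul_assoc B M N ▸ (hN _ (hM B hB).1).1, (mul_assoc M N B).symm ▸ (hM _ (hN B hB).2).2⟩
  one_mem' B hB := ⟨(mul_one B).symm ▸ hB, (one_mul B).symm ▸ hB⟩

theorem isClosed_unistochasticStabilizer :
    IsClosed (unistochasticStabilizer 3 : Set (Matrix (Fin 3) (Fin 3) ℝ)) := by
  change IsClosed {M | ∀ B, Unistochastic B → Unistochastic (B * M) ∧ Unistochastic (M * B)}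
  simp only [Set.ofPred_forall, Set.ofPred_and]
  refine isClosed_iInter fun B => isClosed_iInter fun _ => .inter ?_ ?_
  · exact isClosed_setOf_unistochastic.preimage (f := (B * ·)) (by fun_prop)
  · exact isClosed_setOf_unistochastic.preimage (f := (· * B)) (by fun_prop)

theorem Factorisable.unistochastic_mul {A B : Matrix (Fin 3) (Fin 3) ℝ} (hA : Factorisable A)
    (hB : Unistochastic B) : Unistochastic (A * B) ∧ Unistochastic (B * A) :=
  (hA.mem_of_isClosed isClosed_unistochasticStabilizer
    (fun _ hE _ hC => ⟨hC.mul_elementary hE, hC.elementary_mul hE⟩) B hB).symm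

theorem bistochastic_flatMatrix {d : ℕ} (hd : d ≠ 0) : Bistochastic (flatMatrix d) := by
  refine ⟨fun _ _ => by simp [flatMatrix], ?_, ?_⟩ <;> simp [flatMatrix, hd]

theorem Unistochastic.one_sub_smul_add_smul_flatMatrix {B : Matrix (Fin 3) (Fin 3) ℝ}
    (hB : Unistochastic B) {t : ℝ} (ht₀ : 0 ≤ t) (ht₁ : t ≤ 1) :
    Unistochastic ((1 - t) • B + t • flatMatrix 3) := by
  have hmix : Bistochastic ((1 - t) • B + t • flatMatrix 3) := by
    rw [bistochastic_iff_mem_doublyStochastic]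
    exact convex_doublyStochastic (bistochastic_iff_mem_doublyStochastic.mp hB.1)
      (bistochastic_iff_mem_doublyStochastic.mp (bistochastic_flatMatrix three_ne_zero))
      (by linarith) ht₀ (by ring)
  refine (unistochastic_iff_polygonInequality (zero_ne_one' (Fin 3))).mpr ⟨hmix, ?_⟩
  have hentry : ∀ j k, ((1 - t) • B + t • flatMatrix 3) j k = (1 - t) * B j k + t / 3 := by
    simp [flatMatrix, div_eq_mul_inv]
  simp only [hentry]
  exact (hB.polygonInequality (zero_ne_one' (Fin 3))).sqrt_mul_affine (fun j => hB.1.1 j 0)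
    (fun j => hB.1.1 j 1) (hB.1.2.2 0) (hB.1.2.2 1) (by linarith) (by positivity)

/-- The set of `3 × 3` unistochastic matrices is closed under multiplication by
factorisable matrices, and is star-shaped with respect to the flat matrix `W₃`. -/
theorem unistochastic3_structure :
    (∀ A B : Matrix (Fin 3) (Fin 3) ℝ, Factorisable A → Bistochastic A → Unistochastic B →
      Unistochastic (A * B) ∧ Unistochastic (B * A)) ∧
    (∀ B : Matrix (Fin 3) (Fin 3) ℝ, Unistochastic B → ∀ lam ∈ Set.Icc (0 : ℝ) 1,
      Unistochastic ((1 - lam) • B + lam • flatMatrix 3)) :=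
  ⟨fun _ _ hA _ hB => hA.unistochastic_mul hB,
    fun _ hB _ hlam => hB.one_sub_smul_add_smul_flatMatrix hlam.1 hlam.2⟩
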